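/- arXiv:2106.15994 — 3 statements merged into one kernel-verified Lean document; each statement's English description precedes it below -/
import Mathlib

section
/- There exist δ₀ ∈ (0,1) and ε₀ ∈ (0,1) such that for all δ ∈ (δ₀,1) and all ε ∈ (0,ε₀): V_{n−1}(ε,δ) > V_n^inv(ε,δ), and V_{n−1}(ε,δ) > V_{k'}^inv(ε,δ) for every k' ∈ {0,…,n−2}. That is, with a positive but sufficiently small mistake probability and sufficiently likely repetition, the least tolerant conditional cooperative strategy T_{n−1} is evolutionarily stable against defectors and against all more tolerant conditional cooperators. -/
/-!
Write `n = m + 1`. The binomial weights `ψ(m, ·, ε)` have total mass `1` and mean `m ε`, so the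
one-shot payoffs are `F_C = (1 - ε)(b - c)` and `F_D = (1 - ε)(b - b/n)`. Hence the incumbent beats
the defector as soon as the denominator `D = 1 - (1 - ε)^n δ` is below
`r = (b - c)/(b - b/n)`, which lies in `(0, 1)` because `b/n < c < b`; by Bernoulli's inequality
`D ≤ (1 - δ) + n ε`, so `δ > 1 - r/2` and `ε < r/(2n)` suffice. Against a more tolerant mutant the
numerators differ by `δ (1 - ε)(b/n - c) Σ_{q ≥ 1} ψ(n, q, ε)`, which is negative since `b/n < c`
and the sum contains the positive term `q = 1`.
-/

open Finset

/-- `ψ(j,q,ε) = (j choose q)·ε^q·(1−ε)^(j−q)`. -/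
noncomputable def psi (j q : ℕ) (ε : ℝ) : ℝ :=
  (j.choose q : ℝ) * ε ^ q * (1 - ε) ^ (j - q)

/-- One-shot expected payoff of cooperation against `n−1` error-prone cooperators. -/
noncomputable def FC (n : ℕ) (b c ε : ℝ) : ℝ :=
  (1 - ε) * ∑ q ∈ range n, psi (n - 1) q ε * (b * ((n : ℝ) - q) / n - c) +
    ε * ∑ q ∈ range n, psi (n - 1) q ε * (b * ((n : ℝ) - 1 - q) / n)

/-- One-shot expected payoff of defection against `n−1` error-prone cooperators. -/
noncomputable def FD (n : ℕ) (b ε : ℝ) : ℝ :=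
  ∑ q ∈ range n, psi (n - 1) q ε * (b * ((n : ℝ) - 1 - q) / n)

/-- Repeated-game payoff of the incumbent `T_{n−1}` strategy in a `T_{n−1}` population. -/
noncomputable def Vincumbent (n : ℕ) (b c ε δ : ℝ) : ℝ :=
  FC n b c ε / (1 - (1 - ε) ^ n * δ)

/-- Repeated-game payoff of a single defector (`T_n`) mutant in a `T_{n−1}` population. -/
noncomputable def VdefectorInv (n : ℕ) (b ε : ℝ) : ℝ := FD n b ε

/-- Repeated-game payoff of a single more tolerant `T_{k'}` mutant (`k' < n−1`)
in a `T_{n−1}` population. -/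
noncomputable def VtolerantInv (n k' : ℕ) (b c ε δ : ℝ) : ℝ :=
  (FC n b c ε + δ * (1 - ε) * (b / n - c) * ∑ q ∈ Icc 1 (n - k' - 1), psi n q ε) /
    (1 - (1 - ε) ^ n * δ)

lemma psi_eq_eval_bernsteinPolynomial (j q : ℕ) (ε : ℝ) :
    psi j q ε = (bernsteinPolynomial ℝ j q).eval ε := by
  simp [psi, bernsteinPolynomial]

lemma sum_psi (m : ℕ) (ε : ℝ) : ∑ q ∈ range (m + 1), psi m q ε = 1 := by
  simp only [psi_eq_eval_bernsteinPolynomial, ← Polynomial.eval_finsetSum,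
    bernsteinPolynomial.sum, Polynomial.eval_one]

lemma sum_mul_psi (m : ℕ) (ε : ℝ) :
    ∑ q ∈ range (m + 1), (q : ℝ) * psi m q ε = m * ε := by
  simpa [psi_eq_eval_bernsteinPolynomial, Polynomial.eval_finsetSum] using
    congrArg (Polynomial.eval ε) (bernsteinPolynomial.sum_smul ℝ m)

lemma sum_psi_mul_affine (m : ℕ) (ε x y : ℝ) :
    ∑ q ∈ range (m + 1), psi m q ε * (x + y * q) = x + y * (m * ε) := by
  simp only [mul_add, sum_add_distrib, ← sum_mul, sum_psi, one_mul]
  rw [← sum_mul_psi, mul_sum]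
  congr 1
  exact sum_congr rfl fun q _ => by ring

lemma psi_pos {j q : ℕ} {ε : ℝ} (hq : q ≤ j) (hε0 : 0 < ε) (hε1 : ε < 1) : 0 < psi j q ε :=
  mul_pos (mul_pos (by exact_mod_cast Nat.choose_pos hq) (pow_pos hε0 q))
    (pow_pos (sub_pos.2 hε1) _)

lemma psi_nonneg (j q : ℕ) {ε : ℝ} (hε0 : 0 ≤ ε) (hε1 : ε ≤ 1) : 0 ≤ psi j q ε :=
  mul_nonneg (mul_nonneg (Nat.cast_nonneg _) (pow_nonneg hε0 q)) (pow_nonneg (sub_nonneg.2 hε1) _)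

lemma FD_eq {n : ℕ} (hn : n ≠ 0) (b ε : ℝ) : FD n b ε = (1 - ε) * (b - b / n) := by
  obtain ⟨m, rfl⟩ := Nat.exists_eq_succ_of_ne_zero hn
  have hm : ((m + 1 : ℕ) : ℝ) ≠ 0 := by positivity
  have affine : ∀ q : ℕ, b * (((m + 1 : ℕ) : ℝ) - 1 - q) / (m + 1 : ℕ) =
      (b - b / (m + 1 : ℕ)) + -(b / (m + 1 : ℕ)) * q := fun q => by field_simp; ring
  rw [FD, Nat.succ_sub_one]
  simp only [affine, sum_psi_mul_affine]
  field_simp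
  push_cast
  ring

lemma FC_eq {n : ℕ} (hn : n ≠ 0) (b c ε : ℝ) : FC n b c ε = (1 - ε) * (b - c) := by
  obtain ⟨m, rfl⟩ := Nat.exists_eq_succ_of_ne_zero hn
  have hm : ((m + 1 : ℕ) : ℝ) ≠ 0 := by positivity
  have affine : ∀ q : ℕ, b * (((m + 1 : ℕ) : ℝ) - q) / (m + 1 : ℕ) - c =
      (b - c) + -(b / (m + 1 : ℕ)) * q := fun q => by field_simp; ring
  rw [FC, ← FD, FD_eq hn, Nat.succ_sub_one]
  simp only [affine, sum_psi_mul_affine]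
  field_simp
  push_cast
  ring

lemma one_sub_pow_mul_pos (n : ℕ) {ε δ : ℝ} (hε0 : 0 ≤ ε) (hε1 : ε < 1) (hδ0 : 0 ≤ δ)
    (hδ1 : δ < 1) : 0 < 1 - (1 - ε) ^ n * δ := by
  have : (1 - ε) ^ n ≤ 1 := pow_le_one₀ (by linarith) (by linarith)
  nlinarith

lemma one_sub_pow_mul_le (n : ℕ) {ε δ : ℝ} (hε0 : 0 ≤ ε) (hε1 : ε ≤ 1) (hδ0 : 0 ≤ δ)
    (hδ1 : δ ≤ 1) : 1 - (1 - ε) ^ n * δ ≤ (1 - δ) + n * ε := by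
  have bernoulli : 1 - n * ε ≤ (1 - ε) ^ n := by
    simpa [sub_eq_add_neg] using one_add_mul_le_pow (by linarith : (-2 : ℝ) ≤ -ε) n
  nlinarith [mul_le_mul_of_nonneg_right bernoulli hδ0,
    mul_nonneg (mul_nonneg n.cast_nonneg hε0) (sub_nonneg.2 hδ1)]

lemma VdefectorInv_lt_Vincumbent {n : ℕ} (hn : n ≠ 0) {b c ε δ : ℝ} (hε1 : ε < 1)
    (hD0 : 0 < 1 - (1 - ε) ^ n * δ) (hD : (1 - (1 - ε) ^ n * δ) * (b - b / n) < b - c) :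
    VdefectorInv n b ε < Vincumbent n b c ε δ := by
  rw [VdefectorInv, Vincumbent, FC_eq hn, FD_eq hn, lt_div_iff₀ hD0, mul_assoc]
  exact mul_lt_mul_of_pos_left (by linarith) (sub_pos.2 hε1)

lemma VtolerantInv_lt_Vincumbent {n k' : ℕ} (hk' : k' + 2 ≤ n) {b c ε δ : ℝ} (hbc : b / n < c)
    (hε0 : 0 < ε) (hε1 : ε < 1) (hδ0 : 0 < δ) (hD0 : 0 < 1 - (1 - ε) ^ n * δ) :
    VtolerantInv n k' b c ε δ < Vincumbent n b c ε δ := by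
  have hsum : 0 < ∑ q ∈ Icc 1 (n - k' - 1), psi n q ε :=
    sum_pos' (fun q _ => psi_nonneg n q hε0.le hε1.le)
      ⟨1, mem_Icc.2 ⟨le_rfl, by omega⟩, psi_pos (by omega) hε0 hε1⟩
  have hloss : δ * (1 - ε) * (b / n - c) * ∑ q ∈ Icc 1 (n - k' - 1), psi n q ε < 0 :=
    mul_neg_of_neg_of_pos
      (mul_neg_of_pos_of_neg (mul_pos hδ0 (sub_pos.2 hε1)) (sub_neg.2 hbc)) hsum
  rw [VtolerantInv, Vincumbent, div_lt_div_iff_of_pos_right hD0]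
  linarith

theorem Tn1_evolutionarily_stable_general (n : ℕ) (hn : 2 ≤ n) (b c : ℝ)
    (hbc : b / n < c) (hcb : c < b) :
    ∃ δ₀ : ℝ, 0 < δ₀ ∧ δ₀ < 1 ∧ ∃ ε₀ : ℝ, 0 < ε₀ ∧ ε₀ < 1 ∧
      ∀ δ : ℝ, δ₀ < δ → δ < 1 → ∀ ε : ℝ, 0 < ε → ε < ε₀ →
        Vincumbent n b c ε δ > VdefectorInv n b ε ∧
        ∀ k' : ℕ, k' ≤ n - 2 →
          Vincumbent n b c ε δ > VtolerantInv n k' b c ε δ := by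
  have hnR : (1 : ℝ) ≤ n := by exact_mod_cast (by omega : 1 ≤ n)
  have hA : 0 < b - b / n := by linarith
  set r := (b - c) / (b - b / n)
  have hr0 : 0 < r := div_pos (by linarith) hA
  have hr1 : r < 1 := (div_lt_one hA).2 (by linarith)
  have hε₀1 : r / (2 * n) < 1 := (div_lt_one (by positivity)).2 (by linarith)
  refine ⟨1 - r / 2, by linarith, by linarith, r / (2 * n), by positivity, hε₀1,
    fun δ hδ₀ hδ1 ε hε0 hεε₀ => ?_⟩
  have hε1 : ε < 1 := hεε₀.trans hε₀1
  have hnε : n * ε < r / 2 := by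
    rw [lt_div_iff₀ (by positivity)] at hεε₀
    linarith
  have hD0 := one_sub_pow_mul_pos n hε0.le hε1 (by linarith) hδ1
  have hD : 1 - (1 - ε) ^ n * δ < r := by
    linarith [one_sub_pow_mul_le n hε0.le hε1.le (by linarith) hδ1.le]
  exact ⟨VdefectorInv_lt_Vincumbent (by omega) hε1 hD0 ((lt_div_iff₀ hA).1 hD),
    fun k' hk' => VtolerantInv_lt_Vincumbent (by omega) hbc hε0 hε1 (by linarith) hD0⟩

/-- There exist `δ₀ ∈ (0,1)` and `ε₀ ∈ (0,1)` such that for all `δ ∈ (δ₀,1)` and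
all `ε ∈ (0,ε₀)`, the incumbent `T_{n−1}` payoff strictly exceeds that of a single
defector mutant and that of every single more tolerant conditional cooperator
mutant `T_{k'}`, `k' ∈ {0,…,n−2}`: `T_{n−1}` is evolutionarily stable. -/
theorem Tn1_evolutionarily_stable (n : ℕ) (hn : 2 ≤ n) (b c : ℝ)
    (hb0 : 0 < b / n) (hbc : b / n < c) (hcb : c < b) :
    ∃ δ₀ : ℝ, 0 < δ₀ ∧ δ₀ < 1 ∧ ∃ ε₀ : ℝ, 0 < ε₀ ∧ ε₀ < 1 ∧
      ∀ δ : ℝ, δ₀ < δ → δ < 1 → ∀ ε : ℝ, 0 < ε → ε < ε₀ →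
        Vincumbent n b c ε δ > VdefectorInv n b ε ∧
        ∀ k' : ℕ, k' ≤ n - 2 →
          Vincumbent n b c ε δ > VtolerantInv n k' b c ε δ :=
  Tn1_evolutionarily_stable_general n hn b c hbc hcb
end

section
/- For every δ ∈ (0,1): (i) for each k ∈ {1,…,n−2} the function ε ↦ D1(ε;k) + D2(ε;k) attains a unique strict global minimum on (0,1), i.e., there is a unique ε*_k ∈ (0,1) such that D1(ε*_k;k) + D2(ε*_k;k) < D1(ε;k) + D2(ε;k) for all ε ∈ (0,1) with ε ≠ ε*_k; (ii) for k = n−1 the function ε ↦ D1(ε;n−1) + D2(ε;n−1) is strictly increasing on (0,1), so its infimum is approached only as ε → 0⁺. -/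
open Finset

/-- `D1(ε;k) = ((1−δ)/C(n−1,n−k−1))·ε^{−(n−k−1)}·(1−ε)^{−(k+1)}`. -/
noncomputable def D1 (n k : ℕ) (δ ε : ℝ) : ℝ :=
  ((1 - δ) / ((n - 1).choose (n - k - 1) : ℝ)) * (ε ^ (n - k - 1))⁻¹ *
    ((1 - ε) ^ (k + 1))⁻¹

/-- `D2(ε;k) = δ·Σ_{q=0}^{k} (C(n−1,n−k−1+q)/C(n−1,n−k−1))·ε^q·(1−ε)^{−(q+1)}`. -/
noncomputable def D2 (n k : ℕ) (δ ε : ℝ) : ℝ :=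
  δ * ∑ q ∈ range (k + 1),
    (((n - 1).choose (n - k - 1 + q) : ℝ) / ((n - 1).choose (n - k - 1) : ℝ)) *
      ε ^ q * ((1 - ε) ^ (q + 1))⁻¹


open Set Real


lemma strictConvexOn_congr {s : Set ℝ} {f g : ℝ → ℝ} (hf : StrictConvexOn ℝ s f)
    (h : ∀ x ∈ s, f x = g x) : StrictConvexOn ℝ s g := by
  refine ⟨hf.1, fun x hx y hy hxy a b ha hb hab => ?_⟩
  rw [← h x hx, ← h y hy, ← h _ (hf.1 hx hy ha.le hb.le hab)]
  exact hf.2 hx hy hxy ha hb hab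

lemma convexOn_congr {s : Set ℝ} {f g : ℝ → ℝ} (hf : ConvexOn ℝ s f)
    (h : ∀ x ∈ s, f x = g x) : ConvexOn ℝ s g := by
  refine ⟨hf.1, fun x hx y hy a b ha hb hab => ?_⟩
  rw [← h x hx, ← h y hy, ← h _ (hf.1 hx hy ha hb hab)]
  exact hf.2 hx hy ha hb hab

lemma strictConvexOn_exp_comp {s : Set ℝ} {f : ℝ → ℝ} (hf : StrictConvexOn ℝ s f) :
    StrictConvexOn ℝ s (fun x => Real.exp (f x)) := by
  refine ⟨hf.1, fun x hx y hy hxy a b ha hb hab => ?_⟩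
  calc Real.exp (f (a • x + b • y)) < Real.exp (a * f x + b * f y) := by
        refine Real.exp_lt_exp.2 ?_
        simpa [smul_eq_mul] using hf.2 hx hy hxy ha hb hab
    _ ≤ a * Real.exp (f x) + b * Real.exp (f y) := by
        simpa [smul_eq_mul] using
          convexOn_exp.2 (Set.mem_univ (f x)) (Set.mem_univ (f y)) ha.le hb.le hab

lemma StrictConvexOn.const_mul {s : Set ℝ} {f : ℝ → ℝ} {c : ℝ} (hc : 0 < c)
    (hf : StrictConvexOn ℝ s f) : StrictConvexOn ℝ s (fun x => c * f x) := by
  refine ⟨hf.1, fun x hx y hy hxy a b ha hb hab => ?_⟩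
  have h := hf.2 hx hy hxy ha hb hab
  simp only [smul_eq_mul] at h ⊢
  nlinarith [h]

lemma strictConvexOn_neg_log : StrictConvexOn ℝ (Set.Ioo (0:ℝ) 1) (fun x => -Real.log x) := by
  have := (strictConcaveOn_log_Ioi.subset (fun x hx => hx.1) (convex_Ioo 0 1)).neg
  exact this

lemma strictConvexOn_neg_log_one_sub :
    StrictConvexOn ℝ (Set.Ioo (0:ℝ) 1) (fun x => -Real.log (1 - x)) := by
  refine ⟨convex_Ioo 0 1, fun x hx y hy hxy a b ha hb hab => ?_⟩
  have hx' : (1:ℝ) - x ∈ Set.Ioi (0:ℝ) := by simp; linarith [hx.2]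
  have hy' : (1:ℝ) - y ∈ Set.Ioi (0:ℝ) := by simp; linarith [hy.2]
  have hne : (1:ℝ) - x ≠ 1 - y := fun h => hxy (by linarith)
  have key := strictConcaveOn_log_Ioi.2 hx' hy' hne ha hb hab
  have heq : a • (1 - x) + b • (1 - y) = 1 - (a • x + b • y) := by
    simp only [smul_eq_mul]; nlinarith [hab]
  rw [heq] at key
  simp only [smul_eq_mul] at key ⊢
  linarith

lemma convexOn_finset_sum {ι : Type*} (t : Finset ι) {s : Set ℝ} (hs : Convex ℝ s)
    {f : ι → ℝ → ℝ} (h : ∀ i ∈ t, ConvexOn ℝ s (f i)) :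
    ConvexOn ℝ s (fun x => ∑ i ∈ t, f i x) := by
  classical
  induction t using Finset.induction with
  | empty => simpa using convexOn_const 0 hs
  | @insert i t hnot ih =>
      simp only [Finset.sum_insert hnot]
      exact (h i (Finset.mem_insert_self i t)).add
        (ih fun j hj => h j (Finset.mem_insert_of_mem hj))

lemma monotoneOn_monovaryOn {s : Set ℝ} {f g : ℝ → ℝ} (hf : MonotoneOn f s)
    (hg : MonotoneOn g s) : MonovaryOn f g s := by
  intro i hi j hj hlt
  rcases le_total i j with h | h
  · exact hf hi hj h
  · exact absurd (hg hj hi h) (not_le.2 hlt)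

lemma convexOn_one_sub_inv_pow (m : ℕ) :
    ConvexOn ℝ (Set.Ioo (0:ℝ) 1) (fun ε => ((1 - ε) ^ m)⁻¹) := by
  have h0 : ConvexOn ℝ (Set.Ioo (0:ℝ) 1) (fun ε => (1 - ε) ^ (-(m:ℤ))) := by
    refine ⟨convex_Ioo 0 1, fun x hx y hy a b ha hb hab => ?_⟩
    have hx' : (1:ℝ) - x ∈ Set.Ioi (0:ℝ) := by simp; linarith [hx.2]
    have hy' : (1:ℝ) - y ∈ Set.Ioi (0:ℝ) := by simp; linarith [hy.2]
    have key := (convexOn_zpow (-(m:ℤ))).2 hx' hy' ha hb hab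
    have heq : a • (1 - x) + b • (1 - y) = 1 - (a • x + b • y) := by
      simp only [smul_eq_mul]; nlinarith [hab]
    rw [heq] at key
    simpa using key
  refine convexOn_congr h0 fun x hx => ?_
  rw [zpow_neg, zpow_natCast]

lemma convexOn_D2_term (q m : ℕ) :
    ConvexOn ℝ (Set.Ioo (0:ℝ) 1) (fun ε => ε ^ q * ((1 - ε) ^ m)⁻¹) := by
  have hf : ConvexOn ℝ (Set.Ioo (0:ℝ) 1) (fun ε : ℝ => ε ^ q) :=
    (convexOn_pow q).subset (fun x hx => hx.1.le) (convex_Ioo 0 1)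
  have hg := convexOn_one_sub_inv_pow m
  have hfmono : MonotoneOn (fun ε : ℝ => ε ^ q) (Set.Ioo (0:ℝ) 1) :=
    fun x hx y _ hxy => pow_le_pow_left₀ hx.1.le hxy q
  have hgmono : MonotoneOn (fun ε : ℝ => ((1 - ε) ^ m)⁻¹) (Set.Ioo (0:ℝ) 1) := by
    intro x hx y hy hxy
    have h1 : (0:ℝ) < (1 - y) ^ m := pow_pos (by linarith [hy.2]) m
    have h2 : (1 - y : ℝ) ^ m ≤ (1 - x) ^ m :=
      pow_le_pow_left₀ (by linarith [hy.2]) (by linarith) m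
    exact inv_anti₀ h1 h2
  have := hf.mul hg (fun x hx => pow_nonneg hx.1.le q)
    (fun x hx => inv_nonneg.2 (pow_nonneg (by linarith [hx.2]) m))
    (monotoneOn_monovaryOn hfmono hgmono)
  exact this


lemma strictConvexOn_D1_core (A B : ℕ) (hA : 1 ≤ A) :
    StrictConvexOn ℝ (Set.Ioo (0:ℝ) 1) (fun ε => (ε ^ A)⁻¹ * ((1 - ε) ^ B)⁻¹) := by
  have hA0 : (0:ℝ) < A := by exact_mod_cast hA
  have h1 : StrictConvexOn ℝ (Set.Ioo (0:ℝ) 1) (fun ε => (A:ℝ) * (-Real.log ε)) :=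
    strictConvexOn_neg_log.const_mul hA0
  have h2 : ConvexOn ℝ (Set.Ioo (0:ℝ) 1) (fun ε => (B:ℝ) * (-Real.log (1 - ε))) := by
    have := strictConvexOn_neg_log_one_sub.convexOn.smul (c := (B:ℝ)) (by positivity)
    simpa [smul_eq_mul] using this
  have h3 := strictConvexOn_exp_comp (h1.add_convexOn h2)
  refine strictConvexOn_congr h3 fun x hx => ?_
  have hx0 : (0:ℝ) < x := hx.1
  have hx1 : (0:ℝ) < 1 - x := by linarith [hx.2]
  simp only [Pi.add_apply]
  rw [mul_neg, mul_neg, ← neg_add, Real.exp_neg, Real.exp_add,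
    Real.exp_nat_mul, Real.exp_nat_mul, Real.exp_log hx0, Real.exp_log hx1, mul_inv]

lemma strictConvexOn_F (n k : ℕ) (δ : ℝ) (hδ0 : 0 < δ) (hδ1 : δ < 1) (hA : 1 ≤ n - k - 1) :
    StrictConvexOn ℝ (Set.Ioo (0:ℝ) 1) (fun ε => D1 n k δ ε + D2 n k δ ε) := by
  have hC : (0:ℝ) < ((n-1).choose (n-k-1) : ℝ) := by
    exact_mod_cast Nat.choose_pos (by omega)
  have hc : (0:ℝ) < (1 - δ) / ((n-1).choose (n-k-1) : ℝ) := by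
    apply div_pos <;> [linarith; exact hC]
  have hD1 : StrictConvexOn ℝ (Set.Ioo (0:ℝ) 1) (fun ε => D1 n k δ ε) := by
    refine strictConvexOn_congr
      ((strictConvexOn_D1_core (n-k-1) (k+1) hA).const_mul hc) fun x hx => ?_
    simp only [D1]; ring
  have hD2 : ConvexOn ℝ (Set.Ioo (0:ℝ) 1) (fun ε => D2 n k δ ε) := by
    have hsum : ConvexOn ℝ (Set.Ioo (0:ℝ) 1)
        (fun x => ∑ q ∈ range (k+1),
          (((n-1).choose (n-k-1+q) : ℝ) / ((n-1).choose (n-k-1) : ℝ)) *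
            (x ^ q * ((1 - x) ^ (q+1))⁻¹)) := by
      refine convexOn_finset_sum _ (convex_Ioo 0 1) fun q _ => ?_
      have hnn : (0:ℝ) ≤ ((n-1).choose (n-k-1+q) : ℝ) / ((n-1).choose (n-k-1) : ℝ) := by
        positivity
      simpa [smul_eq_mul] using (convexOn_D2_term q (q+1)).smul hnn
    refine convexOn_congr (hsum.smul hδ0.le) fun x hx => ?_
    simp only [D2, smul_eq_mul, mul_assoc]
  exact hD1.add_convexOn hD2

lemma D2_nonneg (n k : ℕ) {δ ε : ℝ} (hδ : 0 ≤ δ) (hε0 : 0 ≤ ε) (hε1 : ε ≤ 1) :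
    0 ≤ D2 n k δ ε := by
  refine mul_nonneg hδ (Finset.sum_nonneg fun q _ => ?_)
  refine mul_nonneg (mul_nonneg (by positivity) (pow_nonneg hε0 q))
    (inv_nonneg.2 (pow_nonneg (by linarith) _))

lemma F_lower (n k : ℕ) (δ : ℝ) (hδ0 : 0 < δ) (hδ1 : δ < 1) (hA : 1 ≤ n - k - 1)
    {ε : ℝ} (hε : ε ∈ Set.Ioo (0:ℝ) 1) :
    ((1 - δ) / ((n-1).choose (n-k-1) : ℝ)) * ε⁻¹ ≤ D1 n k δ ε + D2 n k δ ε ∧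
    ((1 - δ) / ((n-1).choose (n-k-1) : ℝ)) * (1 - ε)⁻¹ ≤ D1 n k δ ε + D2 n k δ ε := by
  obtain ⟨hε0, hε1⟩ := hε
  have hC : (0:ℝ) < ((n-1).choose (n-k-1) : ℝ) := by
    exact_mod_cast Nat.choose_pos (by omega)
  set c := (1 - δ) / ((n-1).choose (n-k-1) : ℝ) with hcdef
  have hc : (0:ℝ) < c := by apply div_pos <;> [linarith; exact hC]
  have h2 : 0 ≤ D2 n k δ ε := D2_nonneg n k hδ0.le hε0.le hε1.le
  have hinv1 : ε⁻¹ ≤ (ε ^ (n-k-1))⁻¹ := by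
    have : ε ^ (n-k-1) ≤ ε := by
      calc ε ^ (n-k-1) ≤ ε ^ 1 := pow_le_pow_of_le_one hε0.le hε1.le hA
        _ = ε := pow_one ε
    exact inv_anti₀ (pow_pos hε0 _) this
  have hinv1' : (1:ℝ) ≤ ((1 - ε) ^ (k+1))⁻¹ := by
    rw [le_inv_comm₀ one_pos (pow_pos (by linarith) _)]
    simpa using pow_le_one₀ (by linarith) (by linarith)
  have hinv2 : (1 - ε)⁻¹ ≤ ((1 - ε) ^ (k+1))⁻¹ := by
    have : (1 - ε) ^ (k+1) ≤ 1 - ε := by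
      calc (1-ε) ^ (k+1) ≤ (1-ε) ^ 1 :=
            pow_le_pow_of_le_one (by linarith) (by linarith) (by omega)
        _ = 1 - ε := pow_one _
    exact inv_anti₀ (pow_pos (by linarith) _) this
  have hinv2' : (1:ℝ) ≤ (ε ^ (n-k-1))⁻¹ := by
    rw [le_inv_comm₀ one_pos (pow_pos hε0 _)]
    simpa using pow_le_one₀ hε0.le hε1.le
  constructor
  · have : c * ε⁻¹ ≤ c * (ε ^ (n-k-1))⁻¹ * ((1 - ε) ^ (k+1))⁻¹ := by
      calc c * ε⁻¹ ≤ c * (ε ^ (n-k-1))⁻¹ :=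
            mul_le_mul_of_nonneg_left hinv1 hc.le
        _ = c * (ε ^ (n-k-1))⁻¹ * 1 := (mul_one _).symm
        _ ≤ c * (ε ^ (n-k-1))⁻¹ * ((1 - ε) ^ (k+1))⁻¹ := by
            apply mul_le_mul_of_nonneg_left hinv1'
            positivity
    have hD1 : c * ε⁻¹ ≤ D1 n k δ ε := by simpa [D1, hcdef] using this
    linarith
  · have : c * (1-ε)⁻¹ ≤ c * (ε ^ (n-k-1))⁻¹ * ((1 - ε) ^ (k+1))⁻¹ := by
      calc c * (1-ε)⁻¹ = c * 1 * (1-ε)⁻¹ := by ring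
        _ ≤ c * (ε ^ (n-k-1))⁻¹ * (1-ε)⁻¹ := by
            apply mul_le_mul_of_nonneg_right _ (inv_nonneg.2 (by linarith))
            exact mul_le_mul_of_nonneg_left hinv2' hc.le
        _ ≤ c * (ε ^ (n-k-1))⁻¹ * ((1 - ε) ^ (k+1))⁻¹ := by
            apply mul_le_mul_of_nonneg_left hinv2
            positivity
    have hD1 : c * (1-ε)⁻¹ ≤ D1 n k δ ε := by simpa [D1, hcdef] using this
    linarith

/-- For every `δ ∈ (0,1)`: (i) for each `k ∈ {1,…,n−2}` the function
`ε ↦ D1(ε;k) + D2(ε;k)` attains a unique strict global minimum on `(0,1)`;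
(ii) for `k = n−1` this function is strictly increasing on `(0,1)`, so its
infimum is approached only as `ε → 0⁺`. -/
theorem D1_add_D2_unique_minimum (n : ℕ) (hn : 3 ≤ n)
    (δ : ℝ) (hδ0 : 0 < δ) (hδ1 : δ < 1) :
    (∀ k : ℕ, 1 ≤ k → k ≤ n - 2 →
      ∃ εstar : ℝ, εstar ∈ Set.Ioo (0 : ℝ) 1 ∧
        ∀ ε ∈ Set.Ioo (0 : ℝ) 1, ε ≠ εstar →
          D1 n k δ εstar + D2 n k δ εstar < D1 n k δ ε + D2 n k δ ε) ∧
    StrictMonoOn (fun ε => D1 n (n - 1) δ ε + D2 n (n - 1) δ ε)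
      (Set.Ioo (0 : ℝ) 1) := by
  constructor
  · intro k hk1 hk2
    have hA : 1 ≤ n - k - 1 := by omega
    set F := fun ε => D1 n k δ ε + D2 n k δ ε with hF
    have hconv : StrictConvexOn ℝ (Set.Ioo (0:ℝ) 1) F :=
      strictConvexOn_F n k δ hδ0 hδ1 hA
    have hcont : ContinuousOn F (Set.Ioo (0:ℝ) 1) :=
      hconv.convexOn.continuousOn isOpen_Ioo
    set c := (1 - δ) / ((n-1).choose (n-k-1) : ℝ) with hcdef
    have hC : (0:ℝ) < ((n-1).choose (n-k-1) : ℝ) := by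
      exact_mod_cast Nat.choose_pos (by omega)
    have hc : (0:ℝ) < c := by apply div_pos <;> [linarith; exact hC]
    have hFl : ∀ ε ∈ Set.Ioo (0:ℝ) 1, c * ε⁻¹ ≤ F ε ∧ c * (1 - ε)⁻¹ ≤ F ε :=
      fun ε hε => F_lower n k δ hδ0 hδ1 hA hε
    have hhalf : (1/2 : ℝ) ∈ Set.Ioo (0:ℝ) 1 := by norm_num
    set M := F (1/2) with hM
    have hMpos : 0 < M := by
      have h2 : c * (2:ℝ) ≤ M := by
        have := (hFl _ hhalf).1
        norm_num at this
        exact this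
      nlinarith
    set r := min (1/2 : ℝ) (c / (M + 1)) with hrdef
    have hr0 : 0 < r := lt_min (by norm_num) (by positivity)
    have hr1 : r ≤ 1/2 := min_le_left _ _
    have hrc : r * (M + 1) ≤ c := by
      have h1 : r ≤ c / (M + 1) := min_le_right _ _
      rw [le_div_iff₀ (by linarith)] at h1
      exact h1
    have hsub : Set.Icc r (1 - r) ⊆ Set.Ioo (0:ℝ) 1 := by
      intro x hx
      exact ⟨lt_of_lt_of_le hr0 hx.1, lt_of_le_of_lt hx.2 (by linarith)⟩
    obtain ⟨ε0, hε0mem, hε0min⟩ :=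
      isCompact_Icc.exists_isMinOn (s := Set.Icc r (1 - r))
        ⟨1/2, by constructor <;> linarith⟩ (hcont.mono hsub)
    have hε0Ioo : ε0 ∈ Set.Ioo (0:ℝ) 1 := hsub hε0mem
    have hε0M : F ε0 ≤ M := hε0min (by constructor <;> [linarith; linarith] : (1/2:ℝ) ∈ Set.Icc r (1-r))
    clear_value r M c F
    have key : ∀ ε ∈ Set.Ioo (0:ℝ) 1, F ε0 ≤ F ε := by
      intro ε hε
      by_cases hεS : ε ∈ Set.Icc r (1 - r)
      · exact hε0min hεS
      · have h1p : 0 < M + 1 := by linarith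
        rw [Set.mem_Icc, not_and_or, not_le, not_le] at hεS
        rcases hεS with h | h
        · have hb := (hFl ε hε).1
          have : M + 1 ≤ c * r⁻¹ := by
            rw [← div_eq_mul_inv, le_div_iff₀ hr0]; linarith [hrc]
          have hlt : c * r⁻¹ ≤ c * ε⁻¹ :=
            mul_le_mul_of_nonneg_left (inv_anti₀ hε.1 h.le) hc.le
          linarith
        · have hb := (hFl ε hε).2
          have h1ε : 1 - ε < r := by linarith
          have h1εpos : 0 < 1 - ε := by linarith [hε.2]
          have : M + 1 ≤ c * r⁻¹ := by
            rw [← div_eq_mul_inv, le_div_iff₀ hr0]; linarith [hrc]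
          have hlt : c * r⁻¹ ≤ c * (1 - ε)⁻¹ :=
            mul_le_mul_of_nonneg_left (inv_anti₀ h1εpos h1ε.le) hc.le
          linarith
    refine ⟨ε0, hε0Ioo, fun ε hε hne => ?_⟩
    suffices hsuf : F ε0 < F ε by rw [hF] at hsuf; exact hsuf
    by_contra hnot
    push_neg at hnot
    have hle := key ε hε
    have hmid : (1/2 : ℝ) • ε + (1/2 : ℝ) • ε0 ∈ Set.Ioo (0:ℝ) 1 :=
      hconv.1 hε hε0Ioo (by norm_num) (by norm_num) (by norm_num)
    have hstrict := hconv.2 hε hε0Ioo hne (by norm_num : (0:ℝ) < 1/2)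
      (by norm_num : (0:ℝ) < 1/2) (by norm_num)
    have hkm := key _ hmid
    simp only [smul_eq_mul] at hkm
    have hFε : F ε ≤ F ε0 := hnot
    simp only [smul_eq_mul] at hstrict
    linarith [hkm, hstrict, hFε]
  · intro x hx y hy hxy
    have h0 : n - (n - 1) - 1 = 0 := by omega
    have hch : ((n-1).choose 0 : ℝ) = 1 := by simp
    have hx1 : 0 < 1 - x := by linarith [hx.2]
    have hy1 : 0 < 1 - y := by linarith [hy.2]
    have hD1 : D1 n (n-1) δ x < D1 n (n-1) δ y := by
      simp only [D1, h0, hch, pow_zero, inv_one, mul_one, div_one]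
      have hpow : (1 - y) ^ (n - 1 + 1) < (1 - x) ^ (n - 1 + 1) :=
        pow_lt_pow_left₀ (by linarith) hy1.le (by omega)
      have := inv_strictAnti₀ (pow_pos hy1 _) hpow
      have hδ : 0 < 1 - δ := by linarith
      exact mul_lt_mul_of_pos_left this hδ
    have hD2 : D2 n (n-1) δ x ≤ D2 n (n-1) δ y := by
      apply mul_le_mul_of_nonneg_left _ hδ0.le
      apply Finset.sum_le_sum
      intro q hq
      have hcq : (0:ℝ) ≤ ((n-1).choose (n - (n-1) - 1 + q) : ℝ) / ((n-1).choose (n - (n-1) - 1) : ℝ) := by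
        positivity
      have h1 : x ^ q ≤ y ^ q := pow_le_pow_left₀ hx.1.le hxy.le q
      have h2 : ((1 - x) ^ (q+1))⁻¹ ≤ ((1 - y) ^ (q+1))⁻¹ :=
        inv_anti₀ (pow_pos hy1 _) (pow_le_pow_left₀ hy1.le (by linarith) _)
      calc _ * x ^ q * ((1 - x) ^ (q+1))⁻¹ ≤ _ * y ^ q * ((1 - x) ^ (q+1))⁻¹ := by
            apply mul_le_mul_of_nonneg_right (mul_le_mul_of_nonneg_left h1 hcq)
              (inv_nonneg.2 (pow_nonneg hx1.le _))
        _ ≤ _ * y ^ q * ((1 - y) ^ (q+1))⁻¹ := by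
            apply mul_le_mul_of_nonneg_left h2
            exact mul_nonneg hcq (pow_nonneg hy.1.le q)
    exact add_lt_add_of_lt_of_le hD1 hD2
end

section
/- For every δ ∈ (0,1) and every k ∈ {1,…,n−2}, let ε*_k ∈ (0,1) be the unique minimizer of ε ↦ D1(ε;k) + D2(ε;k) on (0,1). Then D1(ε;k) + D2(ε;k) > D1(ε;k+1) + D2(ε;k+1) for all ε ∈ (0,ε*_k), and D1(ε;k) + D2(ε;k) < D1(ε;k+1) + D2(ε;k+1) for all ε ∈ (ε*_k,1); in particular the two curves cross exactly once on (0,1), at ε = ε*_k. -/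
open Finset

/-! Write `F_k = D1(·;k) + D2(·;k)`. The relation `C(N, j+1)(j+1) = C(N, j)(N-j)` between
neighbouring binomial coefficients gives the differential identity
`ε F_k'(ε) = (n-k-1) (F_{k+1}(ε) - F_k(ε))`, so `F_k - F_{k+1}` has the sign of `-F_k'`.
Every term of `F_k` is a nonnegative multiple of `ε^i (1-ε)^j` with `j < 0`, which is convex on
`(0,1)`; hence `F_k` is convex, and a convex function with a strict minimum at `ε*` has negative
derivative to the left of `ε*`, positive derivative to the right, and derivative `0` at `ε*`. -/

open Set

namespace ConvexOn

variable {S : Set ℝ} {f : ℝ → ℝ} {x y f' : ℝ}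

lemma hasDerivAt_neg_of_lt_of_apply_lt (hf : ConvexOn ℝ S f) (hx : x ∈ S) (hy : y ∈ S)
    (hxy : x < y) (hfxy : f y < f x) (hd : HasDerivAt f f' x) : f' < 0 := by
  refine (hf.le_slope_of_hasDerivAt hx hy hxy hd).trans_lt ?_
  rw [slope_def_field]
  exact div_neg_of_neg_of_pos (sub_neg.2 hfxy) (sub_pos.2 hxy)

lemma hasDerivAt_pos_of_lt_of_apply_lt (hf : ConvexOn ℝ S f) (hx : x ∈ S) (hy : y ∈ S)
    (hxy : x < y) (hfxy : f x < f y) (hd : HasDerivAt f f' y) : 0 < f' := by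
  refine lt_of_lt_of_le ?_ (hf.slope_le_of_hasDerivAt hx hy hxy hd)
  rw [slope_def_field]
  exact div_pos (sub_pos.2 hfxy) (sub_pos.2 hxy)

end ConvexOn

lemma Int.mul_sub_one_nonneg (i : ℤ) : 0 ≤ i * (i - 1) := by
  rcases le_or_gt i 0 with h | h <;> nlinarith

lemma int_sq_sub_mul_sq_sub_mul_sq_nonneg {i j : ℤ} (hij : i ≤ 0 ∨ j ≤ 0) {x y : ℝ}
    (hx : 0 ≤ x) (hy : 0 ≤ y) : 0 ≤ (i * x - j * y) ^ 2 - i * x ^ 2 - j * y ^ 2 := by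
  have hi : (0 : ℝ) ≤ i * (i - 1) := by exact_mod_cast i.mul_sub_one_nonneg
  have hj : (0 : ℝ) ≤ j * (j - 1) := by exact_mod_cast j.mul_sub_one_nonneg
  have hx2 := mul_nonneg hi (sq_nonneg x)
  have hy2 := mul_nonneg hj (sq_nonneg y)
  rcases le_or_gt i 0 with hi0 | hi0 <;> rcases le_or_gt j 0 with hj0 | hj0
  · have hi' : (i : ℝ) ≤ 0 := by exact_mod_cast hi0
    have hj' : (j : ℝ) ≤ 0 := by exact_mod_cast hj0
    nlinarith [mul_nonneg (neg_nonneg.2 hi') (sq_nonneg x),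
      mul_nonneg (neg_nonneg.2 hj') (sq_nonneg y)]
  · have hij : (i : ℝ) * j ≤ 0 := by exact_mod_cast mul_nonpos_of_nonpos_of_nonneg hi0 hj0.le
    nlinarith [mul_nonneg (neg_nonneg.2 hij) (mul_nonneg hx hy)]
  · have hij : (i : ℝ) * j ≤ 0 := by exact_mod_cast mul_nonpos_of_nonneg_of_nonpos hi0.le hj0
    nlinarith [mul_nonneg (neg_nonneg.2 hij) (mul_nonneg hx hy)]
  · omega

noncomputable def betaMonomial (i j : ℤ) (ε : ℝ) : ℝ := ε ^ i * (1 - ε) ^ j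

section betaMonomial

variable {i j : ℤ} {ε : ℝ}

lemma betaMonomial_pos (h0 : 0 < ε) (h1 : ε < 1) : 0 < betaMonomial i j ε :=
  mul_pos (zpow_pos h0 i) (zpow_pos (sub_pos.2 h1) j)

lemma betaMonomial_sub_one_left (h0 : ε ≠ 0) :
    betaMonomial (i - 1) j ε = betaMonomial i j ε * ε⁻¹ := by
  rw [betaMonomial, betaMonomial, zpow_sub_one₀ h0]; ring

lemma betaMonomial_sub_one_right (h1 : 1 - ε ≠ 0) :
    betaMonomial i (j - 1) ε = betaMonomial i j ε * (1 - ε)⁻¹ := by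
  rw [betaMonomial, betaMonomial, zpow_sub_one₀ h1]; ring

lemma betaMonomial_add_one_left (h0 : ε ≠ 0) :
    betaMonomial (i + 1) j ε = betaMonomial i j ε * ε := by
  rw [betaMonomial, betaMonomial, zpow_add_one₀ h0]; ring

lemma hasDerivAt_betaMonomial (h0 : ε ≠ 0) (h1 : 1 - ε ≠ 0) :
    HasDerivAt (betaMonomial i j)
      (i * betaMonomial (i - 1) j ε - j * betaMonomial i (j - 1) ε) ε := by
  have hl := hasDerivAt_zpow i ε (.inl h0)
  have hr := (hasDerivAt_zpow j (1 - ε) (.inl h1)).comp ε ((hasDerivAt_id ε).const_sub 1)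
  refine (hl.mul hr).congr_deriv ?_
  simp only [betaMonomial, Function.comp_apply]
  ring

lemma convexOn_betaMonomial (hij : i ≤ 0 ∨ j ≤ 0) :
    ConvexOn ℝ (Ioo 0 1) (betaMonomial i j) := by
  have hd : ∀ {i j : ℤ}, ∀ x ∈ Ioo (0 : ℝ) 1, HasDerivAt (betaMonomial i j)
      (i * betaMonomial (i - 1) j x - j * betaMonomial i (j - 1) x) x :=
    fun x hx => hasDerivAt_betaMonomial hx.1.ne' (sub_pos.2 hx.2).ne'
  refine convexOn_of_hasDerivWithinAt2_nonneg (convex_Ioo 0 1)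
    (fun x hx => (hd x hx).continuousAt.continuousWithinAt)
    (fun x hx => (hd x (interior_subset hx)).hasDerivWithinAt)
    (fun x hx => (((hd x (interior_subset hx)).const_mul _).sub
      ((hd x (interior_subset hx)).const_mul _)).hasDerivWithinAt) ?_
  rw [interior_Ioo]
  intro x hx
  have h0 := hx.1.ne'
  have h1 := (sub_pos.2 hx.2).ne'
  simp only [betaMonomial_sub_one_left h0, betaMonomial_sub_one_right h1]
  have hQ := int_sq_sub_mul_sq_sub_mul_sq_nonneg hij (inv_pos.2 hx.1).le
    (inv_pos.2 (sub_pos.2 hx.2)).le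
  have hG := (betaMonomial_pos (i := i) (j := j) hx.1 hx.2).le
  -- the second derivative is `betaMonomial i j x` times the form `hQ` at `(x⁻¹, (1 - x)⁻¹)`
  refine le_of_le_of_eq (mul_nonneg hG hQ) ?_
  push_cast
  ring

end betaMonomial

lemma Nat.cast_choose_succ_mul {R : Type*} [CommRing R] (N j : ℕ) :
    (N.choose (j + 1) : R) * (j + 1) = N.choose j * ((N : R) - j) := by
  rcases le_or_gt j N with h | h
  · exact_mod_cast congrArg (Nat.cast : ℕ → R) (Nat.choose_succ_right_eq N j) |>.trans
      (by push_cast [Nat.cast_sub h]; ring)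
  · simp [Nat.choose_eq_zero_of_lt h, Nat.choose_eq_zero_of_lt (Nat.lt_succ_of_lt h)]

lemma choose_mul_succ_eq {R : Type*} [CommRing R] (m k : ℕ) :
    ((m + 1 + k).choose m : R) * (k + 1) = (m + 1 + k).choose (m + 1) * (m + 1) := by
  rw [Nat.cast_choose_succ_mul]; push_cast; ring

/-- With `T q = ε^q (1-ε)^(-q-1)`, so that `ε T_q' = q T_q + (q+1) T_(q+1)`, this is the
identity `ε F_k' = (n-k-1) (F_{k+1} - F_k)` for the `D2` part, where `n - 1 = m + 1 + k`. -/
lemma sum_choose_mul_shift {R : Type*} [CommRing R] (m k : ℕ) (T : ℕ → R) :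
    ∑ q ∈ range (k + 1),
        ((m + 1 + k).choose (m + 1 + q) : R) * (q * T q + (q + 1) * T (q + 1)) =
      (k + 1) * ∑ q ∈ range (k + 2), ((m + 1 + k).choose (m + q) : R) * T q -
        (m + 1) * ∑ q ∈ range (k + 1), ((m + 1 + k).choose (m + 1 + q) : R) * T q := by
  set N := m + 1 + k
  have extend : ∀ f : ℕ → R, ∑ q ∈ range (k + 1), (N.choose (m + 1 + q) : R) * f q =
      ∑ q ∈ range (k + 2), (N.choose (m + 1 + q) : R) * f q := by
    intro f
    rw [sum_range_succ _ (k + 1), Nat.choose_eq_zero_of_lt (by omega : N < m + 1 + (k + 1))]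
    simp
  have shift : ∑ q ∈ range (k + 1), (N.choose (m + 1 + q) : R) * ((q + 1) * T (q + 1)) =
      ∑ q ∈ range (k + 2), (N.choose (m + q) : R) * (q * T q) := by
    rw [sum_range_succ' _ (k + 1)]
    simp [add_assoc, add_comm 1]
  calc _ = ∑ q ∈ range (k + 2),
        ((N.choose (m + 1 + q) : R) * q + (N.choose (m + q) : R) * q) * T q := by
        simp only [mul_add, sum_add_distrib, shift, extend (fun q => q * T q)]
        rw [← sum_add_distrib]
        exact sum_congr rfl fun q _ => by ring
    _ = ∑ q ∈ range (k + 2),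
        ((k + 1) * (N.choose (m + q) : R) - (m + 1) * N.choose (m + 1 + q)) * T q := by
        refine sum_congr rfl fun q _ => ?_
        have h := Nat.cast_choose_succ_mul (R := R) N (m + q)
        simp only [N] at h ⊢
        push_cast at h
        rw [show m + 1 + q = m + q + 1 by omega]
        linear_combination T q * h
    _ = _ := by
        rw [extend, mul_sum, mul_sum, ← sum_sub_distrib]
        exact sum_congr rfl fun q _ => by ring

section D

variable {n k : ℕ} {δ ε : ℝ}

lemma D1_eq_betaMonomial (n k : ℕ) (δ : ℝ) : D1 n k δ = fun ε =>
    (1 - δ) / ((n - 1).choose (n - k - 1) : ℝ) *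
      betaMonomial (-(n - k - 1 : ℕ)) (-(k + 1 : ℕ)) ε := by
  funext ε
  simp only [D1, betaMonomial, zpow_neg, zpow_natCast]
  ring

lemma D2_eq_betaMonomial (n k : ℕ) (δ : ℝ) : D2 n k δ = fun ε =>
    δ / ((n - 1).choose (n - k - 1) : ℝ) *
      ∑ q ∈ range (k + 1),
        ((n - 1).choose (n - k - 1 + q) : ℝ) * betaMonomial q (-(q + 1 : ℕ)) ε := by
  funext ε
  simp only [D2, betaMonomial, zpow_neg, zpow_natCast, mul_sum]
  exact sum_congr rfl fun q _ => by ring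

lemma convexOn_D1 (hδ : δ ≤ 1) : ConvexOn ℝ (Ioo 0 1) (D1 n k δ) := by
  rw [D1_eq_betaMonomial]
  exact (convexOn_betaMonomial (.inr (by omega))).smul
    (div_nonneg (sub_nonneg.2 hδ) (Nat.cast_nonneg _))

lemma convexOn_D2 (hδ : 0 ≤ δ) : ConvexOn ℝ (Ioo 0 1) (D2 n k δ) := by
  rw [D2_eq_betaMonomial]
  refine ConvexOn.smul (div_nonneg hδ (Nat.cast_nonneg _)) ?_
  have := Finset.sum_induction
    (fun q ε => ((n - 1).choose (n - k - 1 + q) : ℝ) * betaMonomial q (-(q + 1 : ℕ)) ε)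
    (s := range (k + 1)) (ConvexOn ℝ (Ioo 0 1)) (fun _ _ => ConvexOn.add)
    (convexOn_const 0 (convex_Ioo 0 1))
    (fun q _ => (convexOn_betaMonomial (.inr (by omega))).smul (Nat.cast_nonneg _))
  rwa [Finset.sum_fn] at this

lemma D1_succ (hkn : k + 2 ≤ n) (h0 : ε ≠ 0) (h1 : 1 - ε ≠ 0) :
    (n - k - 1 : ℕ) * D1 n (k + 1) δ ε = (k + 1) * (ε * (1 - ε)⁻¹) * D1 n k δ ε := by
  obtain ⟨m, hm⟩ : ∃ m, n - k - 1 = m + 1 := ⟨n - k - 2, by omega⟩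
  have hm' : n - (k + 1) - 1 = m := by omega
  have hN : n - 1 = m + 1 + k := by omega
  have hC := choose_mul_succ_eq (R := ℝ) m k
  have hC0 : ((m + 1 + k).choose m : ℝ) ≠ 0 := by exact_mod_cast (Nat.choose_pos (by omega)).ne'
  have hC1 : ((m + 1 + k).choose (m + 1) : ℝ) ≠ 0 := by
    exact_mod_cast (Nat.choose_pos (by omega)).ne'
  simp only [D1, hm, hm', hN]
  rw [pow_succ ε m, pow_succ (1 - ε) (k + 1)]
  field_simp
  push_cast
  linear_combination (δ - 1) * hC

lemma hasDerivAt_D1 (hkn : k + 2 ≤ n) (h0 : ε ≠ 0) (h1 : 1 - ε ≠ 0) :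
    HasDerivAt (D1 n k δ) ((n - k - 1 : ℕ) / ε * (D1 n (k + 1) δ ε - D1 n k δ ε)) ε := by
  have hD := (hasDerivAt_betaMonomial (i := -(n - k - 1 : ℕ)) (j := -(k + 1 : ℕ)) h0
    h1).const_mul ((1 - δ) / ((n - 1).choose (n - k - 1) : ℝ))
  have hsucc := D1_succ (δ := δ) hkn h0 h1
  rw [congrFun (D1_eq_betaMonomial n k δ) ε] at hsucc
  rw [D1_eq_betaMonomial n k δ]
  refine hD.congr_deriv ?_
  rw [betaMonomial_sub_one_left h0, betaMonomial_sub_one_right h1, mul_sub (_ / ε),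
    div_mul_eq_mul_div _ ε (D1 _ _ _ _), hsucc]
  push_cast
  field_simp
  ring

lemma hasDerivAt_D2 (hkn : k + 2 ≤ n) (h0 : ε ≠ 0) (h1 : 1 - ε ≠ 0) :
    HasDerivAt (D2 n k δ) ((n - k - 1 : ℕ) / ε * (D2 n (k + 1) δ ε - D2 n k δ ε)) ε := by
  obtain ⟨m, hm⟩ : ∃ m, n - k - 1 = m + 1 := ⟨n - k - 2, by omega⟩
  have hm' : n - (k + 1) - 1 = m := by omega
  have hN : n - 1 = m + 1 + k := by omega
  have hC := choose_mul_succ_eq (R := ℝ) m k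
  have hC0 : ((m + 1 + k).choose m : ℝ) ≠ 0 := by exact_mod_cast (Nat.choose_pos (by omega)).ne'
  have hC1 : ((m + 1 + k).choose (m + 1) : ℝ) ≠ 0 := by
    exact_mod_cast (Nat.choose_pos (by omega)).ne'
  have hT : ∀ q : ℕ, HasDerivAt (betaMonomial q (-(q + 1 : ℕ)))
      ((q * betaMonomial q (-(q + 1 : ℕ)) ε +
        (q + 1) * betaMonomial (q + 1 : ℕ) (-(q + 1 + 1 : ℕ)) ε) / ε) ε := by
    intro q
    refine (hasDerivAt_betaMonomial h0 h1).congr_deriv ?_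
    push_cast
    rw [neg_add' ((q : ℤ) + 1) 1, betaMonomial_sub_one_left h0, betaMonomial_sub_one_right h1,
      betaMonomial_sub_one_right h1, betaMonomial_add_one_left h0]
    field_simp
    ring
  have hsum := (HasDerivAt.fun_sum (u := range (k + 1)) fun q _ => (hT q).const_mul
    ((n - 1).choose (n - k - 1 + q) : ℝ)).const_mul (δ / ((n - 1).choose (n - k - 1) : ℝ))
  have hshift := sum_choose_mul_shift m k fun q => betaMonomial q (-(q + 1 : ℕ)) ε
  rw [D2_eq_betaMonomial n k δ]
  refine hsum.congr_deriv ?_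
  rw [D2_eq_betaMonomial n (k + 1) δ]
  simp only [hm, hm', hN, mul_div_assoc', ← sum_div, show k + 1 + 1 = k + 2 from rfl]
  rw [hshift, Nat.cast_add_one]
  field_simp
  linear_combination δ * (∑ q ∈ range (k + 2),
    ((m + 1 + k).choose (m + q) : ℝ) * betaMonomial q (-(q + 1 : ℕ)) ε) * hC

noncomputable def D (n k : ℕ) (δ ε : ℝ) : ℝ := D1 n k δ ε + D2 n k δ ε

lemma convexOn_D (hδ0 : 0 ≤ δ) (hδ1 : δ ≤ 1) : ConvexOn ℝ (Ioo 0 1) (D n k δ) :=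
  (convexOn_D1 hδ1).add (convexOn_D2 hδ0)

lemma hasDerivAt_D (hkn : k + 2 ≤ n) (h0 : ε ≠ 0) (h1 : 1 - ε ≠ 0) :
    HasDerivAt (D n k δ) ((n - k - 1 : ℕ) / ε * (D n (k + 1) δ ε - D n k δ ε)) ε :=
  ((hasDerivAt_D1 hkn h0 h1).add (hasDerivAt_D2 hkn h0 h1)).congr_deriv (by simp only [D]; ring)

end D

theorem curves_cross_once_general (n : ℕ) (hn : 3 ≤ n)
    (δ : ℝ) (hδ0 : 0 < δ) (hδ1 : δ < 1)
    (k : ℕ) (hk2 : k ≤ n - 2)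
    (εstar : ℝ) (hε : εstar ∈ Set.Ioo (0 : ℝ) 1)
    (hmin : ∀ ε ∈ Set.Ioo (0 : ℝ) 1, ε ≠ εstar →
      D1 n k δ εstar + D2 n k δ εstar < D1 n k δ ε + D2 n k δ ε) :
    (∀ ε ∈ Set.Ioo (0 : ℝ) εstar,
      D1 n k δ ε + D2 n k δ ε > D1 n (k + 1) δ ε + D2 n (k + 1) δ ε) ∧
    (∀ ε ∈ Set.Ioo εstar (1 : ℝ),
      D1 n k δ ε + D2 n k δ ε < D1 n (k + 1) δ ε + D2 n (k + 1) δ ε) ∧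
    (∀ ε ∈ Set.Ioo (0 : ℝ) 1,
      (D1 n k δ ε + D2 n k δ ε = D1 n (k + 1) δ ε + D2 n (k + 1) δ ε ↔
        ε = εstar)) := by
  have hkn : k + 2 ≤ n := by omega
  have hconv : ConvexOn ℝ (Ioo 0 1) (D n k δ) := convexOn_D hδ0.le hδ1.le
  have hderiv (ε : ℝ) (hε : ε ∈ Ioo (0 : ℝ) 1) :=
    hasDerivAt_D (δ := δ) hkn hε.1.ne' (sub_pos.2 hε.2).ne'
  have hscale (ε : ℝ) (hε : ε ∈ Ioo (0 : ℝ) 1) : 0 < ((n - k - 1 : ℕ) : ℝ) / ε :=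
    div_pos (by exact_mod_cast (by omega : 0 < n - k - 1)) hε.1
  have below (ε : ℝ) (hε' : ε ∈ Ioo 0 εstar) : D n (k + 1) δ ε < D n k δ ε := by
    have hε1 : ε ∈ Ioo (0 : ℝ) 1 := ⟨hε'.1, hε'.2.trans hε.2⟩
    have hneg := hconv.hasDerivAt_neg_of_lt_of_apply_lt hε1 hε hε'.2 (hmin ε hε1 hε'.2.ne)
      (hderiv ε hε1)
    exact sub_neg.1 (neg_of_mul_neg_right hneg (hscale ε hε1).le)
  have above (ε : ℝ) (hε' : ε ∈ Ioo εstar 1) : D n k δ ε < D n (k + 1) δ ε := by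
    have hε1 : ε ∈ Ioo (0 : ℝ) 1 := ⟨hε.1.trans hε'.1, hε'.2⟩
    have hpos := hconv.hasDerivAt_pos_of_lt_of_apply_lt hε hε1 hε'.1 (hmin ε hε1 hε'.1.ne')
      (hderiv ε hε1)
    exact sub_pos.1 (pos_of_mul_pos_right hpos (hscale ε hε1).le)
  refine ⟨below, above, fun ε hε' => ⟨fun heq => ?_, ?_⟩⟩
  · rcases lt_trichotomy ε εstar with h | h | h
    · exact absurd heq.symm (below ε ⟨hε'.1, h⟩).ne
    · exact h
    · exact absurd heq (above ε ⟨h, hε'.2⟩).ne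
  · rintro rfl
    have hmin' : IsMinOn (D n k δ) (Ioo 0 1) ε := isMinOn_iff.2 fun x hx =>
      (eq_or_ne x ε).elim (fun h => h ▸ le_rfl) fun h => (hmin x hx h).le
    have hlocal : IsLocalMin (D n k δ) ε := hmin'.isLocalMin (isOpen_Ioo.mem_nhds hε')
    have hzero := (mul_eq_zero.1 (hlocal.hasDerivAt_eq_zero (hderiv ε hε'))).resolve_left
      (hscale ε hε').ne'
    exact (sub_eq_zero.1 hzero).symm

/-- For every `δ ∈ (0,1)` and `k ∈ {1,…,n−2}`, if `ε*_k ∈ (0,1)` is the unique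
strict minimizer of `ε ↦ D1(ε;k) + D2(ε;k)` on `(0,1)`, then
`D1(ε;k) + D2(ε;k) > D1(ε;k+1) + D2(ε;k+1)` on `(0,ε*_k)` and
`D1(ε;k) + D2(ε;k) < D1(ε;k+1) + D2(ε;k+1)` on `(ε*_k,1)`; in particular the
two curves cross exactly once on `(0,1)`, at `ε = ε*_k`. -/
theorem curves_cross_once (n : ℕ) (hn : 3 ≤ n)
    (δ : ℝ) (hδ0 : 0 < δ) (hδ1 : δ < 1)
    (k : ℕ) (hk1 : 1 ≤ k) (hk2 : k ≤ n - 2)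
    (εstar : ℝ) (hε : εstar ∈ Set.Ioo (0 : ℝ) 1)
    (hmin : ∀ ε ∈ Set.Ioo (0 : ℝ) 1, ε ≠ εstar →
      D1 n k δ εstar + D2 n k δ εstar < D1 n k δ ε + D2 n k δ ε) :
    (∀ ε ∈ Set.Ioo (0 : ℝ) εstar,
      D1 n k δ ε + D2 n k δ ε > D1 n (k + 1) δ ε + D2 n (k + 1) δ ε) ∧
    (∀ ε ∈ Set.Ioo εstar (1 : ℝ),
      D1 n k δ ε + D2 n k δ ε < D1 n (k + 1) δ ε + D2 n (k + 1) δ ε) ∧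
    (∀ ε ∈ Set.Ioo (0 : ℝ) 1,
      (D1 n k δ ε + D2 n k δ ε = D1 n (k + 1) δ ε + D2 n (k + 1) δ ε ↔
        ε = εstar)) :=
  curves_cross_once_general n hn δ hδ0 hδ1 k hk2 εstar hε hmin
end
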